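/- arXiv:1604.05478 — 2 statements merged into one kernel-verified Lean document; each statement's English description precedes it below -/
import Mathlib

section
/- Fix integers n1, n2 ≥ 3, θ = (φ, ρ11, ρ12, ρ21, ρ22) ∈ ℝ^5, indices i ∈ {0,…,n2−1}, j ∈ {0,…,n1−1}, and a sign s ∈ {+1, −1}. Then the real number μ^s_{ij}(θ) = ((a_{ij} + d_{ij}) + s·√((a_{ij} − d_{ij})² + 4|b_{ij}|²))/2 is an eigenvalue of Q̃_{n1,n2}(θ): there exists a nonzero vector u ∈ ℂ^{2n} with Q̃_{n1,n2}(θ)·u = μ^s_{ij}(θ)·u. -/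
open Matrix

/-- Smallest element of the real spectrum of a real (symmetric) matrix. -/
noncomputable def lamMin {m : Type} [Fintype m] [DecidableEq m] (M : Matrix m m ℝ) : ℝ :=
  sInf (spectrum ℝ M)

/-- Block-Toeplitz block `T_{n1,n2}(x,y,z)`, indexed by pairs `(a,b)` with
`a ∈ Fin n2`, `b ∈ Fin n1`. -/
def Tmat (n1 n2 : ℕ) (x y z : ℝ) :
    Matrix (Fin n2 × Fin n1) (Fin n2 × Fin n1) ℝ := fun p q =>
  if q = p then y
  else if (q.1 = p.1 ∧ (q.2 : ℕ) = (p.2 : ℕ) + 1) ∨ (q.2 = p.2 ∧ (q.1 : ℕ) = (p.1 : ℕ) + 1) then z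
  else if (q.1 = p.1 ∧ (q.2 : ℕ) + 1 = (p.2 : ℕ)) ∨ (q.2 = p.2 ∧ (q.1 : ℕ) + 1 = (p.1 : ℕ)) then x
  else 0

/-- Block-circulant block `C_{n1,n2}(x,y,z)`. -/
def Cmat (n1 n2 : ℕ) (x y z : ℝ) :
    Matrix (Fin n2 × Fin n1) (Fin n2 × Fin n1) ℝ := fun p q =>
  if q = p then y
  else if (q.1 = p.1 ∧ (q.2 : ℕ) = ((p.2 : ℕ) + 1) % n1) ∨
          (q.2 = p.2 ∧ (q.1 : ℕ) = ((p.1 : ℕ) + 1) % n2) then z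
  else if (q.1 = p.1 ∧ ((q.2 : ℕ) + 1) % n1 = (p.2 : ℕ)) ∨
          (q.2 = p.2 ∧ ((q.1 : ℕ) + 1) % n2 = (p.1 : ℕ)) then x
  else 0

/-- The precision matrix `Q_{n1,n2}(θ)`, `θ = (φ, ρ11, ρ12, ρ21, ρ22)`. -/
def Qmat (n1 n2 : ℕ) (φ ρ11 ρ12 ρ21 ρ22 : ℝ) :
    Matrix ((Fin n2 × Fin n1) ⊕ (Fin n2 × Fin n1)) ((Fin n2 × Fin n1) ⊕ (Fin n2 × Fin n1)) ℝ :=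
  Matrix.fromBlocks (Tmat n1 n2 ρ11 1 ρ11) (Tmat n1 n2 ρ21 φ ρ12)
    (Tmat n1 n2 ρ21 φ ρ12)ᵀ (Tmat n1 n2 ρ22 1 ρ22)

/-- The block-circulant (toroidal) approximation `Q̃_{n1,n2}(θ)`. -/
def Qcmat (n1 n2 : ℕ) (φ ρ11 ρ12 ρ21 ρ22 : ℝ) :
    Matrix ((Fin n2 × Fin n1) ⊕ (Fin n2 × Fin n1)) ((Fin n2 × Fin n1) ⊕ (Fin n2 × Fin n1)) ℝ :=
  Matrix.fromBlocks (Cmat n1 n2 ρ11 1 ρ11) (Cmat n1 n2 ρ21 φ ρ12)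
    (Cmat n1 n2 ρ21 φ ρ12)ᵀ (Cmat n1 n2 ρ22 1 ρ22)

/-! The circulant blocks of `Q̃` are simultaneously diagonalised by the Fourier modes
`(a, b) ↦ ω₂ ^ a * ω₁ ^ b` with `ω₂ ^ n2 = ω₁ ^ n1 = 1`: `C(x, y, z)` multiplies such a mode by
`y + z w + x w̄`, where `w = ω₂ + ω₁`. On vectors `(α v, β v)` built from one mode `v`, `Q̃`
therefore acts as the Hermitian matrix `[[a, b], [b̄, d]]`, whose eigenvalues are the two roots
`μ` of `(μ - a) (μ - d) = |b|²`. -/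

open Real Complex ComplexConjugate

namespace Fin

variable {n : ℕ} [NeZero n]

theorem one_ne_zero_of_two_le (hn : 2 ≤ n) : (1 : Fin n) ≠ 0 := by
  simp [Fin.ext_iff, Nat.mod_eq_of_lt (show 1 < n by omega)]

theorem add_one_ne_sub_one (hn : 3 ≤ n) (p : Fin n) : p + 1 ≠ p - 1 := by
  intro h
  have h2 : (1 : Fin n) + 1 = 0 := by rw [← sub_eq_zero.mpr h]; abel
  simp [Fin.ext_iff, Fin.val_add, Nat.mod_eq_of_lt (show 1 < n by omega),
    Nat.mod_eq_of_lt (show 2 < n by omega)] at h2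

theorem eq_add_one_iff_val_eq_mod (p q : Fin n) : q = p + 1 ↔ (q : ℕ) = ((p : ℕ) + 1) % n := by
  rw [Fin.ext_iff, Fin.val_add, Fin.val_one', Nat.add_mod_mod]

theorem eq_sub_one_iff_val_add_one_mod (p q : Fin n) : q = p - 1 ↔ ((q : ℕ) + 1) % n = p := by
  rw [eq_sub_iff_add_eq, Fin.ext_iff, Fin.val_add, Fin.val_one', Nat.add_mod_mod]

end Fin

theorem pow_val_add_one_of_pow_eq_one {M : Type*} [Monoid M] {ω : M} {n : ℕ} [NeZero n]
    (hω : ω ^ n = 1) (k : Fin n) : ω ^ ((k + 1 : Fin n) : ℕ) = ω ^ (k : ℕ) * ω := by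
  rw [Fin.val_add, Fin.val_one', Nat.add_mod_mod, ← pow_eq_pow_mod _ hω, pow_succ]

theorem pow_val_sub_one_of_pow_eq_one {G₀ : Type*} [GroupWithZero G₀] {ω : G₀} {n : ℕ}
    [NeZero n] (hω : ω ^ n = 1) (k : Fin n) : ω ^ ((k - 1 : Fin n) : ℕ) = ω ^ (k : ℕ) * ω⁻¹ := by
  have hω0 : ω ≠ 0 := by rintro rfl; simp [NeZero.ne n] at hω
  rw [eq_mul_inv_iff_mul_eq₀ hω0, ← pow_val_add_one_of_pow_eq_one hω, sub_add_cancel]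

theorem exp_two_pi_I_mul_div_pow_eq_one (k : ℕ) {n : ℕ} (hn : n ≠ 0) :
    Complex.exp (2 * π * I * k / n) ^ n = 1 := by
  rw [← Complex.exp_nat_mul, mul_div_cancel₀ _ (by exact_mod_cast hn), mul_comm,
    Complex.exp_nat_mul_two_pi_mul_I]

theorem exp_two_pi_I_mul_div_re (k n : ℕ) :
    (Complex.exp (2 * π * I * k / n)).re = Real.cos (2 * π * k / n) := by
  rw [← Complex.exp_ofReal_mul_I_re]
  push_cast
  ring_nf

theorem sub_mul_sub_eq_of_eq_quadratic_root {a d c μ s : ℝ} (hdisc : 0 ≤ (a - d) ^ 2 + 4 * c)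
    (hs : s ^ 2 = 1) (hμ : μ = ((a + d) + s * √((a - d) ^ 2 + 4 * c)) / 2) :
    (μ - a) * (μ - d) = c := by
  have hsq : (2 * μ - (a + d)) ^ 2 = (a - d) ^ 2 + 4 * c := by
    rw [hμ, show 2 * (((a + d) + s * √((a - d) ^ 2 + 4 * c)) / 2) - (a + d) =
      s * √((a - d) ^ 2 + 4 * c) by ring, mul_pow, hs, one_mul, Real.sq_sqrt hdisc]
  linear_combination hsq / 4

theorem exists_eigenvector_of_sub_mul_sub_eq_normSq (a d : ℝ) (b : ℂ) {μ : ℝ}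
    (hμ : (μ - a) * (μ - d) = ‖b‖ ^ 2) :
    ∃ α β : ℂ, (α ≠ 0 ∨ β ≠ 0) ∧ a * α + b * β = μ * α ∧ conj b * α + d * β = μ * β := by
  by_cases hμd : μ = d
  · have hb : b = 0 := by simpa [hμd] using hμ.symm
    exact ⟨0, 1, Or.inr one_ne_zero, by simp [hb], by simp [hb, hμd]⟩
  · refine ⟨μ - d, conj b, Or.inl (sub_ne_zero.mpr (by exact_mod_cast hμd)), ?_, by ring⟩
    have hμc : ((μ : ℂ) - a) * (μ - d) = b * conj b := by
      rw [Complex.mul_conj, Complex.normSq_eq_norm_sq]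
      exact_mod_cast hμ
    linear_combination -hμc

theorem fromBlocks_mulVec_sum_elim_smul {m R : Type*} [Fintype m] [CommRing R]
    {A B C D : Matrix m m R} {v : m → R} {a b c d : R}
    (hA : A *ᵥ v = a • v) (hB : B *ᵥ v = b • v) (hC : C *ᵥ v = c • v) (hD : D *ᵥ v = d • v)
    (α β : R) :
    fromBlocks A B C D *ᵥ Sum.elim (α • v) (β • v) =
      Sum.elim ((a * α + b * β) • v) ((c * α + d * β) • v) := by
  rw [fromBlocks_mulVec, Sum.elim_comp_inl, Sum.elim_comp_inr, mulVec_smul, mulVec_smul,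
    mulVec_smul, mulVec_smul, hA, hB, hC, hD]
  simp only [smul_smul, ← add_smul, mul_comm α, mul_comm β]

theorem sum_elim_smul_ne_zero {m R : Type*} [Ring R] [NoZeroDivisors R] {v : m → R}
    (hv : v ≠ 0) {α β : R} (h : α ≠ 0 ∨ β ≠ 0) : Sum.elim (α • v) (β • v) ≠ 0 := by
  rw [Ne, ← Sum.elim_zero_zero, Sum.elim_eq_iff, not_and_or, smul_eq_zero, smul_eq_zero]
  simpa [hv] using h

section Circulant

variable {n1 n2 : ℕ} [NeZero n1] [NeZero n2]

/-- For `n1, n2 ≥ 3` the site `p` and its four neighbours are pairwise distinct, so the nested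
`if` defining `Cmat` splits into a sum. -/
theorem Cmat_apply (h1 : 3 ≤ n1) (h2 : 3 ≤ n2) (x y z : ℝ) (p q : Fin n2 × Fin n1) :
    Cmat n1 n2 x y z p q =
      (if q = p then y else 0) + (if q = (p.1, p.2 + 1) then z else 0) +
        (if q = (p.1 + 1, p.2) then z else 0) + (if q = (p.1, p.2 - 1) then x else 0) +
          (if q = (p.1 - 1, p.2) then x else 0) := by
  have hone₁ := Fin.one_ne_zero_of_two_le (n := n1) (by omega)
  have hone₂ := Fin.one_ne_zero_of_two_le (n := n2) (by omega)
  have hsep₁ := Fin.add_one_ne_sub_one h1 p.2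
  have hsep₂ := Fin.add_one_ne_sub_one h2 p.1
  obtain ⟨a, b⟩ := p
  obtain ⟨c, d⟩ := q
  simp only [Cmat, ← Fin.eq_add_one_iff_val_eq_mod, ← Fin.eq_sub_one_iff_val_add_one_mod,
    Prod.mk.injEq]
  split_ifs <;> simp_all

theorem Cmat_transpose (h1 : 3 ≤ n1) (h2 : 3 ≤ n2) (x y z : ℝ) :
    (Cmat n1 n2 x y z)ᵀ = Cmat n1 n2 z y x := by
  ext p q
  rw [transpose_apply, Cmat_apply h1 h2, Cmat_apply h1 h2]
  simp only [Prod.ext_iff, eq_sub_iff_add_eq]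
  simp only [eq_comm (a := p.1), eq_comm (a := p.2), eq_comm (a := p.1 + 1),
    eq_comm (a := p.2 + 1)]
  ring

theorem Cmat_map_mulVec_apply (h1 : 3 ≤ n1) (h2 : 3 ≤ n2) (x y z : ℝ)
    (v : Fin n2 × Fin n1 → ℂ) (p : Fin n2 × Fin n1) :
    ((Cmat n1 n2 x y z).map ((↑) : ℝ → ℂ) *ᵥ v) p =
      y * v p + z * (v (p.1, p.2 + 1) + v (p.1 + 1, p.2)) +
        x * (v (p.1, p.2 - 1) + v (p.1 - 1, p.2)) := by
  simp only [mulVec, dotProduct, map_apply, Cmat_apply h1 h2, Complex.ofReal_add,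
    apply_ite ((↑) : ℝ → ℂ), Complex.ofReal_zero, add_mul, ite_mul, zero_mul,
    Finset.sum_add_distrib, Finset.sum_ite_eq', Finset.mem_univ, if_true]
  ring

def fourierMode (ω₂ ω₁ : ℂ) (p : Fin n2 × Fin n1) : ℂ := ω₂ ^ (p.1 : ℕ) * ω₁ ^ (p.2 : ℕ)

theorem fourierMode_ne_zero (ω₂ ω₁ : ℂ) : fourierMode (n1 := n1) (n2 := n2) ω₂ ω₁ ≠ 0 :=
  Function.ne_iff.mpr ⟨0, by simp [fourierMode]⟩

theorem Cmat_map_mulVec_fourierMode (h1 : 3 ≤ n1) (h2 : 3 ≤ n2) (x y z : ℝ) {ω₁ ω₂ : ℂ}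
    (hω₁ : ω₁ ^ n1 = 1) (hω₂ : ω₂ ^ n2 = 1) :
    (Cmat n1 n2 x y z).map ((↑) : ℝ → ℂ) *ᵥ fourierMode ω₂ ω₁ =
      (y + z * (ω₂ + ω₁) + x * conj (ω₂ + ω₁)) • fourierMode ω₂ ω₁ := by
  ext p
  rw [Cmat_map_mulVec_apply h1 h2, map_add,
    ← Complex.inv_eq_conj (Complex.norm_eq_one_of_pow_eq_one hω₁ (NeZero.ne n1)),
    ← Complex.inv_eq_conj (Complex.norm_eq_one_of_pow_eq_one hω₂ (NeZero.ne n2))]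
  simp only [fourierMode, pow_val_add_one_of_pow_eq_one hω₁, pow_val_add_one_of_pow_eq_one hω₂,
    pow_val_sub_one_of_pow_eq_one hω₁, pow_val_sub_one_of_pow_eq_one hω₂, Pi.smul_apply,
    smul_eq_mul]
  ring

theorem Qcmat_map_mulVec_fourierMode (h1 : 3 ≤ n1) (h2 : 3 ≤ n2) (φ ρ11 ρ12 ρ21 ρ22 : ℝ)
    {ω₁ ω₂ w b : ℂ} (hω₁ : ω₁ ^ n1 = 1) (hω₂ : ω₂ ^ n2 = 1) (hw : w = ω₂ + ω₁)
    (hb : b = φ + ρ12 * w + ρ21 * conj w) (α β : ℂ) :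
    (Qcmat n1 n2 φ ρ11 ρ12 ρ21 ρ22).map ((↑) : ℝ → ℂ) *ᵥ
        Sum.elim (α • fourierMode ω₂ ω₁) (β • fourierMode ω₂ ω₁) =
      Sum.elim (((1 + ρ11 * (w + conj w)) * α + b * β) • fourierMode ω₂ ω₁)
        ((conj b * α + (1 + ρ22 * (w + conj w)) * β) • fourierMode ω₂ ω₁) := by
  have hconj : conj b = φ + ρ21 * w + ρ12 * conj w := by
    simp only [hb, map_add, map_mul, Complex.conj_ofReal, Complex.conj_conj]
    ring
  rw [Qcmat, fromBlocks_map, Cmat_transpose h1 h2, hconj, hb, hw]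
  refine fromBlocks_mulVec_sum_elim_smul ?_ ?_ ?_ ?_ α β <;>
    rw [Cmat_map_mulVec_fourierMode h1 h2 _ _ _ hω₁ hω₂] <;> push_cast <;> ring_nf

end Circulant

/-- Each of the two numbers `((a+d) ± √((a−d)² + 4|b|²))/2` obtained from the
`(i,j)`-th 2×2 Fourier block is an eigenvalue of `Q̃_{n1,n2}(θ)`. -/
theorem two_by_two_block_eigenvalue (n1 n2 : ℕ) (h1 : 3 ≤ n1) (h2 : 3 ≤ n2)
    (φ ρ11 ρ12 ρ21 ρ22 : ℝ) (i : Fin n2) (j : Fin n1)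
    (s : ℝ) (hs : s = 1 ∨ s = -1)
    (w : ℂ)
    (hw : w = Complex.exp (2 * Real.pi * Complex.I * ((i : ℕ) : ℂ) / (n2 : ℂ)) +
              Complex.exp (2 * Real.pi * Complex.I * ((j : ℕ) : ℂ) / (n1 : ℂ)))
    (a d : ℝ)
    (ha : a = 1 + 2 * ρ11 * (Real.cos (2 * Real.pi * ((i : ℕ) : ℝ) / (n2 : ℝ)) +
                             Real.cos (2 * Real.pi * ((j : ℕ) : ℝ) / (n1 : ℝ))))
    (hd : d = 1 + 2 * ρ22 * (Real.cos (2 * Real.pi * ((i : ℕ) : ℝ) / (n2 : ℝ)) +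
                             Real.cos (2 * Real.pi * ((j : ℕ) : ℝ) / (n1 : ℝ))))
    (b : ℂ) (hb : b = (φ : ℂ) + (ρ12 : ℂ) * w + (ρ21 : ℂ) * (starRingEnd ℂ) w)
    (μ : ℝ)
    (hμ : μ = ((a + d) + s * Real.sqrt ((a - d) ^ 2 + 4 * ‖b‖ ^ 2)) / 2) :
    ∃ u : (Fin n2 × Fin n1) ⊕ (Fin n2 × Fin n1) → ℂ, u ≠ 0 ∧
      ((Qcmat n1 n2 φ ρ11 ρ12 ρ21 ρ22).map (fun t : ℝ => (t : ℂ))) *ᵥ u = (μ : ℂ) • u := by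
  have : NeZero n1 := ⟨by omega⟩
  have : NeZero n2 := ⟨by omega⟩
  set ω₁ := Complex.exp (2 * π * I * (j : ℕ) / n1)
  set ω₂ := Complex.exp (2 * π * I * (i : ℕ) / n2)
  have hω₁ : ω₁ ^ n1 = 1 := exp_two_pi_I_mul_div_pow_eq_one _ (NeZero.ne n1)
  have hω₂ : ω₂ ^ n2 = 1 := exp_two_pi_I_mul_div_pow_eq_one _ (NeZero.ne n2)
  have hdiag (ρ : ℝ) : 1 + ρ * (w + conj w) = ((1 + 2 * ρ * (Real.cos (2 * π * (i : ℕ) / n2) +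
      Real.cos (2 * π * (j : ℕ) / n1)) : ℝ) : ℂ) := by
    rw [Complex.add_conj, hw, Complex.add_re, exp_two_pi_I_mul_div_re, exp_two_pi_I_mul_div_re]
    push_cast
    ring
  have hs2 : s ^ 2 = 1 := by rcases hs with rfl | rfl <;> norm_num
  obtain ⟨α, β, hαβ, e₁, e₂⟩ := exists_eigenvector_of_sub_mul_sub_eq_normSq a d b
    (sub_mul_sub_eq_of_eq_quadratic_root (by positivity) hs2 hμ)
  refine ⟨Sum.elim (α • fourierMode ω₂ ω₁) (β • fourierMode ω₂ ω₁),
    sum_elim_smul_ne_zero (fourierMode_ne_zero ω₂ ω₁) hαβ, ?_⟩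
  rw [Qcmat_map_mulVec_fourierMode h1 h2 φ ρ11 ρ12 ρ21 ρ22 hω₁ hω₂ hw hb, hdiag, hdiag, ← ha, ← hd,
    e₁, e₂]
  ext (q | q) <;> simp [mul_smul]
end

section
/- Fix integers n1, n2 ≥ 3 and θ = (φ, ρ11, ρ12, ρ21, ρ22) ∈ ℝ^5. The characteristic polynomial of the 2n×2n real symmetric matrix Q̃_{n1,n2}(θ) equals the product over i ∈ {0,…,n2−1} and j ∈ {0,…,n1−1} of the real quadratic factors (X² − (a_{ij} + d_{ij})·X + (a_{ij}·d_{ij} − |b_{ij}|²)). (Full spectrum of the block-circulant approximation via its unitary block-diagonalization into 2×2 Hermitian blocks.) -/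
open Matrix

/-!
The characters `χ_q p = exp (2πi (q₁ p₁ / n₂ + q₂ p₂ / n₁))` of the discrete torus
`ℤ/n₂ × ℤ/n₁` are common eigenvectors of all circulant matrices on it, and by Dedekind's
lemma they form a basis. Conjugating `Q̃` by `diag (F, F)`, where `F` is the character table,
therefore gives a 2×2 block matrix with diagonal blocks, whose characteristic polynomial is
the product of those of its `n` 2×2 Fourier blocks. The block `C(x, y, z)` is the circulant of
the nearest-neighbour stencil, with eigenvalue `y + z w + x w̄` at `χ_q` (where
`w = χ_q (1, 0) + χ_q (0, 1)`); its transpose has eigenvalue `y + z w̄ + x w`, so for real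
parameters the off-diagonal product is `|b|²`.
-/

open Polynomial

section BlockDiagonalCharpoly
variable {R ι : Type*} [CommRing R] [Fintype ι] [DecidableEq ι]

theorem det_fromBlocks_diagonal (a b c d : ι → R) :
    (fromBlocks (diagonal a) (diagonal b) (diagonal c) (diagonal d)).det =
      ∏ i, (a i * d i - b i * c i) := by
  let e : Fin 2 × ι ≃ ι ⊕ ι :=
    (finTwoEquiv.prodCongr (Equiv.refl ι)).trans (Equiv.boolProdEquivSum ι)
  have h0 : finTwoEquiv.symm false = 0 := rfl
  have h1 : finTwoEquiv.symm true = 1 := rfl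
  have : fromBlocks (diagonal a) (diagonal b) (diagonal c) (diagonal d) =
      reindex e e (blockDiagonal fun i => !![a i, b i; c i, d i]) := by
    ext (i | i) (j | j) <;> simp [e, blockDiagonal_apply, diagonal_apply, h0, h1]
  simp [this, det_blockDiagonal, det_fin_two]

theorem charpoly_fromBlocks_diagonal (a b c d : ι → R) :
    (fromBlocks (diagonal a) (diagonal b) (diagonal c) (diagonal d)).charpoly =
      ∏ i, (X ^ 2 - C (a i + d i) * X + C (a i * d i - b i * c i)) := by
  rw [charpoly, charmatrix_fromBlocks, charmatrix_diagonal, charmatrix_diagonal,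
    diagonal_map (map_zero C), diagonal_map (map_zero C), diagonal_neg, diagonal_neg,
    det_fromBlocks_diagonal]
  refine Finset.prod_congr rfl fun i _ => ?_
  simp only [map_add, map_sub, map_mul]
  ring

theorem charpoly_eq_of_mul_eq_mul {A B P : Matrix ι ι R} (hP : IsUnit P) (h : A * P = P * B) :
    A.charpoly = B.charpoly := by
  obtain ⟨u, rfl⟩ := hP
  rw [← charpoly_units_conj u B, ← h, mul_nonsing_inv_cancel_right]
  exact (isUnit_iff_isUnit_det _).mp u.isUnit

end BlockDiagonalCharpoly

section CirculantDiagonalization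
variable {G K : Type*} [AddCommGroup G] [Fintype G]

def characterMatrix [CommRing K] (χ : G → AddChar G K) : Matrix G G K := of fun p i => χ i p

def circulantEigenvalue [CommRing K] (χ : G → AddChar G K) (v : G → K) (i : G) : K :=
  ∑ s, v s * χ i (-s)

theorem circulantEigenvalue_comp_neg [CommRing K] (χ : G → AddChar G K) (v : G → K) (i : G) :
    circulantEigenvalue χ (fun s => v (-s)) i = ∑ s, v s * χ i s :=
  Fintype.sum_equiv (Equiv.neg G) _ _ fun s => by simp

variable [DecidableEq G]

theorem circulant_mul_characterMatrix [CommRing K] (χ : G → AddChar G K) (v : G → K) :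
    circulant v * characterMatrix χ = characterMatrix χ * diagonal (circulantEigenvalue χ v) := by
  ext p i
  rw [mul_diagonal, mul_apply]
  simp only [circulant_apply, characterMatrix, of_apply, circulantEigenvalue, Finset.mul_sum]
  refine Fintype.sum_equiv (Equiv.subLeft p) _ _ fun r => ?_
  rw [Equiv.subLeft_apply, mul_left_comm, ← AddChar.map_add_eq_mul]
  simp

theorem isUnit_characterMatrix [Field K] {χ : G → AddChar G K} (hχ : Function.Injective χ) :
    IsUnit (characterMatrix χ) := by
  rw [← linearIndependent_cols_iff_isUnit]
  exact (linearIndependent_monoidHom (Multiplicative G) K).comp _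
    (AddChar.toMonoidHomEquiv.injective.comp hχ)

theorem charpoly_fromBlocks_circulant [Field K] {χ : G → AddChar G K} (hχ : Function.Injective χ)
    (v₁₁ v₁₂ v₂₁ v₂₂ : G → K) :
    (fromBlocks (circulant v₁₁) (circulant v₁₂) (circulant v₂₁) (circulant v₂₂)).charpoly =
      ∏ i, (X ^ 2 - C (circulantEigenvalue χ v₁₁ i + circulantEigenvalue χ v₂₂ i) * X +
        C (circulantEigenvalue χ v₁₁ i * circulantEigenvalue χ v₂₂ i -
          circulantEigenvalue χ v₁₂ i * circulantEigenvalue χ v₂₁ i)) := by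
  rw [← charpoly_fromBlocks_diagonal]
  refine charpoly_eq_of_mul_eq_mul
    (P := fromBlocks (characterMatrix χ) 0 0 (characterMatrix χ)) ?_ ?_
  · rw [isUnit_iff_isUnit_det, det_fromBlocks_zero₂₁, IsUnit.mul_iff, ← isUnit_iff_isUnit_det]
    exact ⟨isUnit_characterMatrix hχ, isUnit_characterMatrix hχ⟩
  · simp only [fromBlocks_multiply, circulant_mul_characterMatrix, Matrix.mul_zero,
      Matrix.zero_mul, add_zero, zero_add]

end CirculantDiagonalization

section Stencil
variable {G R : Type*} [AddCommGroup G] [DecidableEq G]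

/-- The tests come in the order used by `Cmat`, so that `Cmat_eq_circulant` holds without
assuming the five points `0, ±e₁, ±e₂` distinct. -/
def stencil [Zero R] (e₁ e₂ : G) (x y z : R) (s : G) : R :=
  if s = 0 then y else if s = -e₁ ∨ s = -e₂ then z else if s = e₁ ∨ s = e₂ then x else 0

theorem comp_stencil {S : Type*} [Zero R] [Zero S] (f : R → S) (hf : f 0 = 0) (e₁ e₂ : G)
    (x y z : R) : (fun s => f (stencil e₁ e₂ x y z s)) = stencil e₁ e₂ (f x) (f y) (f z) := by
  ext s
  simp only [stencil]
  split_ifs <;> simp [hf]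

theorem sum_stencil_mul [Fintype G] [CommSemiring R] {e₁ e₂ : G}
    (h : [0, -e₁, -e₂, e₁, e₂].Nodup) (x y z : R) (g : G → R) :
    ∑ s, stencil e₁ e₂ x y z s * g s =
      y * g 0 + z * (g (-e₁) + g (-e₂)) + x * (g e₁ + g e₂) := by
  rw [← Finset.sum_subset (Finset.subset_univ [0, -e₁, -e₂, e₁, e₂].toFinset),
    List.sum_toFinset _ h]
  · simp only [List.nodup_cons, List.mem_cons, List.mem_nil_iff, or_false, not_or] at h
    obtain ⟨⟨-, -, h03, h04⟩, ⟨h12, h13, h14⟩, ⟨h23, h24⟩, -⟩ := h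
    simp only [List.map_cons, List.map_nil, List.sum_cons, List.sum_nil, stencil]
    simp [h12, Ne.symm h03, Ne.symm h04, Ne.symm h13, Ne.symm h14, Ne.symm h23, Ne.symm h24]
    ring
  · intro s _ hs
    simp only [List.mem_toFinset, List.mem_cons, List.mem_nil_iff, or_false, not_or] at hs
    simp [stencil, hs]

variable [Fintype G] {K : Type*} [RCLike K] {e₁ e₂ : G}

theorem circulantEigenvalue_stencil (h : [0, -e₁, -e₂, e₁, e₂].Nodup) (χ : G → AddChar G K)
    (x y z : K) (i : G) :
    circulantEigenvalue χ (stencil e₁ e₂ x y z) i =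
      y + z * (χ i e₁ + χ i e₂) + x * starRingEnd K (χ i e₁ + χ i e₂) := by
  rw [circulantEigenvalue, sum_stencil_mul h]
  simp [AddChar.map_neg_eq_conj]

theorem circulantEigenvalue_stencil_comp_neg (h : [0, -e₁, -e₂, e₁, e₂].Nodup)
    (χ : G → AddChar G K) (x y z : K) (i : G) :
    circulantEigenvalue χ (fun s => stencil e₁ e₂ x y z (-s)) i =
      y + z * starRingEnd K (χ i e₁ + χ i e₂) + x * (χ i e₁ + χ i e₂) := by
  rw [circulantEigenvalue_comp_neg, sum_stencil_mul h]
  simp [AddChar.map_neg_eq_conj]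

end Stencil

section Torus
variable {n : ℕ} [NeZero n]

noncomputable def finStdAddChar (n : ℕ) [NeZero n] : AddChar (Fin n) ℂ :=
  ZMod.stdAddChar.compAddMonoidHom ((ZMod.finEquiv n : Fin n ≃+* ZMod n) : Fin n →+ ZMod n)

theorem finStdAddChar_apply (k : Fin n) :
    finStdAddChar n k = Complex.exp (2 * Real.pi * Complex.I * (k : ℕ) / n) := by
  have hk : ZMod.finEquiv n k = ((k : ℕ) : ZMod n) := by
    obtain ⟨m, rfl⟩ := Nat.exists_eq_succ_of_ne_zero (NeZero.ne n)
    exact (Fin.cast_val_eq_self k).symm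
  change ZMod.stdAddChar (ZMod.finEquiv n k) = _
  rw [hk, ZMod.stdAddChar_apply, ZMod.toCircle_natCast]

theorem finStdAddChar_one_pow (k : Fin n) : finStdAddChar n 1 ^ (k : ℕ) = finStdAddChar n k := by
  rw [finStdAddChar_apply k, ← AddChar.map_nsmul_eq_pow]
  change ZMod.stdAddChar (ZMod.finEquiv n ((k : ℕ) • 1)) = _
  rw [map_nsmul, map_one, nsmul_one, ZMod.stdAddChar_apply, ZMod.toCircle_natCast]

theorem finStdAddChar_injective : Function.Injective (finStdAddChar n) :=
  ZMod.injective_stdAddChar.comp (ZMod.finEquiv n).injective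

theorem re_finStdAddChar (k : Fin n) :
    (finStdAddChar n k).re = Real.cos (2 * Real.pi * (k : ℕ) / n) := by
  rw [finStdAddChar_apply, show 2 * Real.pi * Complex.I * (k : ℕ) / n
    = ((2 * Real.pi * (k : ℕ) / n : ℝ) : ℂ) * Complex.I by push_cast; ring,
    Complex.exp_ofReal_mul_I_re]

theorem Fin.one_ne_neg_one (h : 3 ≤ n) : (1 : Fin n) ≠ -1 := by
  intro h1
  have := congrArg Fin.val (eq_neg_iff_add_eq_zero.mp h1)
  rw [Fin.val_add, Fin.val_one', Fin.val_zero, Nat.mod_eq_of_lt (by omega : 1 < n),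
    Nat.mod_eq_of_lt (by omega : 2 < n)] at this
  omega

theorem Fin.eq_add_one_iff (a b : Fin n) : a = b + 1 ↔ (a : ℕ) = ((b : ℕ) + 1) % n := by
  rw [Fin.ext_iff, Fin.val_add, Fin.val_one', Nat.add_mod_mod]

variable {n₁ n₂ : ℕ} [NeZero n₁] [NeZero n₂]

-- Powers rather than `AddChar.mulShift`: `Fin n` has no global ring structure.
noncomputable def torusChar (q : Fin n₂ × Fin n₁) : AddChar (Fin n₂ × Fin n₁) ℂ :=
  (finStdAddChar n₂ ^ (q.1 : ℕ)).compAddMonoidHom (AddMonoidHom.fst _ _) *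
    (finStdAddChar n₁ ^ (q.2 : ℕ)).compAddMonoidHom (AddMonoidHom.snd _ _)

theorem torusChar_one_zero (q : Fin n₂ × Fin n₁) : torusChar q (1, 0) = finStdAddChar n₂ q.1 := by
  simp [torusChar, AddChar.pow_apply, finStdAddChar_one_pow]

theorem torusChar_zero_one (q : Fin n₂ × Fin n₁) : torusChar q (0, 1) = finStdAddChar n₁ q.2 := by
  simp [torusChar, AddChar.pow_apply, finStdAddChar_one_pow]

theorem torusChar_injective : Function.Injective (torusChar (n₁ := n₁) (n₂ := n₂)) := by
  intro q q' h
  have h₁ := DFunLike.congr_fun h (1, 0)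
  have h₂ := DFunLike.congr_fun h (0, 1)
  rw [torusChar_one_zero, torusChar_one_zero] at h₁
  rw [torusChar_zero_one, torusChar_zero_one] at h₂
  exact Prod.ext (finStdAddChar_injective h₁) (finStdAddChar_injective h₂)

theorem nodup_torus_stencil (h₁ : 3 ≤ n₁) (h₂ : 3 ≤ n₂) :
    ([0, -(1, 0), -(0, 1), (1, 0), (0, 1)] : List (Fin n₂ × Fin n₁)).Nodup := by
  have h₁' := Fin.one_ne_neg_one h₁
  have h₂' := Fin.one_ne_neg_one h₂
  have h₁'' : (1 : Fin n₁) ≠ 0 := fun h => h₁' (by rw [h, neg_zero])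
  have h₂'' : (1 : Fin n₂) ≠ 0 := fun h => h₂' (by rw [h, neg_zero])
  simp [Prod.ext_iff, h₁'', h₂'', h₁'.symm, h₂'.symm, h₁''.symm, h₂''.symm]

theorem Cmat_eq_circulant (x y z : ℝ) :
    Cmat n₁ n₂ x y z = circulant (stencil (1, 0) (0, 1) x y z) := by
  ext p q
  have hz : ∀ e : Fin n₂ × Fin n₁, p - q = -e ↔ q = p + e := fun e => by
    rw [← neg_sub, neg_inj, sub_eq_iff_eq_add, add_comm]
  have hx : ∀ e : Fin n₂ × Fin n₁, p - q = e ↔ p = q + e := fun e => by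
    rw [sub_eq_iff_eq_add, add_comm]
  simp only [Cmat, circulant_apply, stencil, hz, hx]
  simp only [Prod.ext_iff, Prod.fst_add, Prod.snd_add, add_zero, Fin.eq_add_one_iff]
  refine if_congr ?_ rfl (if_congr ?_ rfl (if_congr ?_ rfl rfl)) <;> grind

theorem map_Cmat (x y z : ℝ) :
    (Cmat n₁ n₂ x y z).map Complex.ofRealHom = circulant (stencil (1, 0) (0, 1) (x : ℂ) y z) := by
  rw [Cmat_eq_circulant, map_circulant, comp_stencil _ (map_zero _)]
  rfl

end Torus

/-- The characteristic polynomial of `Q̃_{n1,n2}(θ)` splits into the quadratic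
factors `X² − (a+d)·X + (a·d − |b|²)` coming from its 2×2 Fourier blocks. -/
theorem circulant_precision_charpoly (n1 n2 : ℕ) (h1 : 3 ≤ n1) (h2 : 3 ≤ n2)
    (φ ρ11 ρ12 ρ21 ρ22 : ℝ)
    (w : Fin n2 × Fin n1 → ℂ)
    (hw : ∀ p : Fin n2 × Fin n1,
      w p = Complex.exp (2 * Real.pi * Complex.I * ((p.1 : ℕ) : ℂ) / (n2 : ℂ)) +
            Complex.exp (2 * Real.pi * Complex.I * ((p.2 : ℕ) : ℂ) / (n1 : ℂ)))
    (a d : Fin n2 × Fin n1 → ℝ)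
    (ha : ∀ p : Fin n2 × Fin n1,
      a p = 1 + 2 * ρ11 * (Real.cos (2 * Real.pi * ((p.1 : ℕ) : ℝ) / (n2 : ℝ)) +
                           Real.cos (2 * Real.pi * ((p.2 : ℕ) : ℝ) / (n1 : ℝ))))
    (hd : ∀ p : Fin n2 × Fin n1,
      d p = 1 + 2 * ρ22 * (Real.cos (2 * Real.pi * ((p.1 : ℕ) : ℝ) / (n2 : ℝ)) +
                           Real.cos (2 * Real.pi * ((p.2 : ℕ) : ℝ) / (n1 : ℝ))))
    (b : Fin n2 × Fin n1 → ℂ)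
    (hb : ∀ p : Fin n2 × Fin n1,
      b p = (φ : ℂ) + (ρ12 : ℂ) * w p + (ρ21 : ℂ) * (starRingEnd ℂ) (w p)) :
    (Qcmat n1 n2 φ ρ11 ρ12 ρ21 ρ22).charpoly =
      ∏ p : Fin n2 × Fin n1,
        (Polynomial.X ^ 2 - Polynomial.C (a p + d p) * Polynomial.X +
          Polynomial.C (a p * d p - ‖b p‖ ^ 2)) := by
  have : NeZero n1 := ⟨by omega⟩
  have : NeZero n2 := ⟨by omega⟩
  refine map_injective Complex.ofRealHom Complex.ofRealHom.injective ?_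
  rw [← charpoly_map, Qcmat, fromBlocks_map, transpose_map, map_Cmat, map_Cmat, map_Cmat,
    transpose_circulant, charpoly_fromBlocks_circulant (χ := torusChar) torusChar_injective,
    Polynomial.map_prod]
  refine Finset.prod_congr rfl fun q _ => ?_
  have hnodup := nodup_torus_stencil (n₁ := n1) (n₂ := n2) h1 h2
  rw [circulantEigenvalue_stencil hnodup, circulantEigenvalue_stencil hnodup,
    circulantEigenvalue_stencil hnodup, circulantEigenvalue_stencil_comp_neg hnodup,
    torusChar_one_zero, torusChar_zero_one]
  set W := finStdAddChar n2 q.1 + finStdAddChar n1 q.2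
  have hW : W = w q := by rw [hw q, ← finStdAddChar_apply, ← finStdAddChar_apply]
  have hre : W.re = Real.cos (2 * Real.pi * (q.1 : ℕ) / n2) +
      Real.cos (2 * Real.pi * (q.2 : ℕ) / n1) := by
    rw [Complex.add_re, re_finStdAddChar, re_finStdAddChar]
  have hA : ((1 : ℝ) : ℂ) + ρ11 * W + ρ11 * starRingEnd ℂ W = a q := by
    rw [ha q, add_assoc, ← mul_add, Complex.add_conj, hre]; push_cast; ring
  have hD : ((1 : ℝ) : ℂ) + ρ22 * W + ρ22 * starRingEnd ℂ W = d q := by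
    rw [hd q, add_assoc, ← mul_add, Complex.add_conj, hre]; push_cast; ring
  have hB : (φ : ℂ) + ρ12 * W + ρ21 * starRingEnd ℂ W = b q := by rw [hb q, hW]
  have hC : (φ : ℂ) + ρ12 * starRingEnd ℂ W + ρ21 * W = starRingEnd ℂ (b q) := by
    rw [← hB]; simp
  rw [hA, hD, hB, hC, Complex.mul_conj']
  simp
end
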